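/- Let G1, G2 be groups and φ : G1 → G2 a bijection such that a multiset over G1 is a product-one sequence over G1 if and only if its termwise image under φ is a product-one sequence over G2. If g1, g2 in G1 satisfy g1 g2 ≠ g2 g1 and φ(g1 g2) = φ(g1) φ(g2), then φ(g2 g1) = φ(g2) φ(g1). -/

import Mathlib

/-- A multiset `S` over a group `G` is a *product-one sequence* if its terms can be
ordered so that their product is `1`. -/
def IsProductOne {G : Type*} [Group G] (S : Multiset G) : Prop :=
  ∃ l : List G, (l : Multiset G) = S ∧ l.prod = 1

/-- The monoid `B(G)` of product-one sequences over `G`, as a submonoid of the free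
abelian monoid (finite multisets under addition) over `G`. -/
def ProductOneSubmonoid (G : Type*) [Group G] : AddSubmonoid (Multiset G) where
  carrier := {S | IsProductOne S}
  zero_mem' := ⟨[], rfl, rfl⟩
  add_mem' := by
    rintro a b ⟨l1, rfl, p1⟩ ⟨l2, rfl, p2⟩
    exact ⟨l1 ++ l2, by simp, by simp [p1, p2]⟩

/-!
Rotating a product-one ordering of `c ::ₘ S` so that `c` comes last shows that `c ::ₘ S` is a
product-one sequence iff some ordering of `S` has product `c⁻¹`. Hence `{x, x⁻¹}` forces
`φ x⁻¹ = (φ x)⁻¹`, and `{(x * y)⁻¹, x, y}` forces `φ (x * y)` to be `φ x * φ y` or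
`φ y * φ x`. For `x = g2`, `y = g1` the second alternative equals `φ (g1 * g2)`, which is
excluded by injectivity since `g1 * g2 ≠ g2 * g1`.
-/

def PreservesProductOne {G₁ G₂ : Type*} [Group G₁] [Group G₂] (φ : G₁ → G₂) : Prop :=
  ∀ S : Multiset G₁, IsProductOne S → IsProductOne (S.map φ)

section

variable {G : Type*} [Group G]

theorem isProductOne_cons_iff {c : G} {S : Multiset G} :
    IsProductOne (c ::ₘ S) ↔ ∃ l : List G, (l : Multiset G) = S ∧ l.prod = c⁻¹ := by
  constructor
  · rintro ⟨l, hl, hprod⟩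
    have hc : c ∈ l := by simp [← Multiset.mem_coe, hl]
    obtain ⟨s, t, rfl⟩ := List.append_of_mem hc
    refine ⟨t ++ s, ?_, ?_⟩
    · apply (Multiset.cons_inj_right c).1
      rw [← hl, Multiset.cons_coe, Multiset.coe_eq_coe]
      exact (List.perm_middle.trans (List.perm_append_comm.cons c)).symm
    · rw [List.prod_append, List.prod_cons, mul_eq_one_comm, mul_assoc] at hprod
      simpa using eq_inv_of_mul_eq_one_right hprod
  · rintro ⟨l, rfl, hprod⟩
    exact ⟨l ++ [c], by simp, by simp [hprod]⟩

theorem isProductOne_pair_iff {a b : G} : IsProductOne ({a, b} : Multiset G) ↔ b = a⁻¹ := by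
  simp [Multiset.insert_eq_cons, isProductOne_cons_iff, Multiset.coe_eq_singleton]

theorem isProductOne_triple_iff {a b c : G} :
    IsProductOne ({c, a, b} : Multiset G) ↔ a * b = c⁻¹ ∨ b * a = c⁻¹ := by
  rw [Multiset.insert_eq_cons, isProductOne_cons_iff]
  constructor
  · rintro ⟨l, hl, hprod⟩
    rw [show ({a, b} : Multiset G) = ([a, b] : List G) from rfl, Multiset.coe_eq_coe,
      List.perm_pair] at hl
    rcases hl with rfl | rfl <;> simp_all
  · rintro (hab | hba)
    · exact ⟨[a, b], rfl, by simpa using hab⟩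
    · exact ⟨[b, a], Multiset.coe_eq_coe.2 (List.Perm.swap a b []), by simpa using hba⟩

end

namespace PreservesProductOne

variable {G₁ G₂ : Type*} [Group G₁] [Group G₂] {φ : G₁ → G₂}

theorem map_inv (hφ : PreservesProductOne φ) (x : G₁) : φ x⁻¹ = (φ x)⁻¹ := by
  have hx : IsProductOne ({x, x⁻¹} : Multiset G₁) := isProductOne_pair_iff.2 rfl
  have := hφ _ hx
  rwa [Multiset.insert_eq_cons, Multiset.map_cons, Multiset.map_singleton,
    ← Multiset.insert_eq_cons, isProductOne_pair_iff] at this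

theorem map_mul_or (hφ : PreservesProductOne φ) (x y : G₁) :
    φ (x * y) = φ x * φ y ∨ φ (x * y) = φ y * φ x := by
  have hxy : IsProductOne ({(x * y)⁻¹, x, y} : Multiset G₁) :=
    isProductOne_triple_iff.2 (Or.inl (inv_inv _).symm)
  have := hφ _ hxy
  simp only [Multiset.insert_eq_cons, Multiset.map_cons, Multiset.map_singleton,
    hφ.map_inv] at this
  rw [← Multiset.insert_eq_cons, ← Multiset.insert_eq_cons, isProductOne_triple_iff,
    inv_inv] at this
  exact this.imp Eq.symm Eq.symm

end PreservesProductOne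

theorem A4_consequence (G1 G2 : Type*) [Group G1] [Group G2]
    (φ : G1 → G2) (hbij : Function.Bijective φ)
    (h : ∀ S : Multiset G1, IsProductOne S ↔ IsProductOne (S.map φ))
    (g1 g2 : G1) (hne : g1 * g2 ≠ g2 * g1)
    (h12 : φ (g1 * g2) = φ g1 * φ g2) :
    φ (g2 * g1) = φ g2 * φ g1 := by
  have hφ : PreservesProductOne φ := fun S => (h S).1
  refine (hφ.map_mul_or g2 g1).resolve_right fun h21 => hne ?_
  exact hbij.injective (h12.trans h21.symm)
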